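/- arXiv:0810.3881 — 4 statements merged into one kernel-verified Lean document; each statement's English description precedes it below -/
import Mathlib

section
/- Let Z be a Banach space. The following assertions are equivalent: (a) Z admits a C^p-smooth, Lipschitz bump function; (b) there exist numbers a, b > 0 and a Lipschitz function ψ : Z → [0,∞) which is C^p-smooth on Z \ {0}, homogeneous (ψ(tx) = |t|ψ(x) for all t ∈ ℝ, x ∈ Z), and such that a‖x‖ ≤ ψ(x) ≤ b‖x‖ for all x ∈ Z. -/
/-!
Normalize the given bump by composing it with `Real.smoothTransition`: this gives a Lipschitz
`C^p` function `b` with values in `[0, 1]`, equal to `1` on a ball `B(δ)` and vanishing outside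
`B(R)`. Its radial integral `g x = ∫ t, b (t • x)` satisfies `g (s • x) = |s|⁻¹ * g x` and
`2δ / ‖x‖ ≤ g x ≤ 2R / ‖x‖`; it is `C^p` away from `0`, being a parametric integral of a smooth
integrand whose support in `t` is locally uniformly compact; and for `‖y‖ ≤ ‖x‖` the integrands
only differ on `|t| ≤ R / ‖y‖`, where they differ by at most `K |t| ‖x - y‖`. Hence `ψ = 1 / g`
is homogeneous, comparable to the norm, and Lipschitz on pairs of points of comparable norm;
on the remaining pairs `|ψ x - ψ y| ≤ ψ x + ψ y` is already controlled by `‖x - y‖`.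

Conversely, `Real.smoothTransition (2 - ψ)` is a Lipschitz bump, and it is `C^p` also at the
origin since it is identically `1` on the neighbourhood `{ψ < 1}` of `0`.
-/

open Function Bornology

section

open Set MeasureTheory Real Filter Metric Topology Convolution

theorem Real.smoothTransition.exists_lipschitzWith : ∃ K, LipschitzWith K smoothTransition := by
  obtain ⟨K, hK⟩ := (smoothTransition.contDiff (n := 1)).contDiffOn.exists_lipschitzOnWith
    one_ne_zero (convex_Icc 0 1) isCompact_Icc
  refine ⟨K * 1, ?_⟩
  convert hK.to_restrict.comp (LipschitzWith.projIcc zero_le_one) using 1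
  ext x
  simp

theorem exists_lipschitzWith_of_abs_le_mul_norm {E : Type*} [SeminormedAddCommGroup E]
    {ψ : E → ℝ} {B L : ℝ} (hB₀ : 0 ≤ B) (hB : ∀ z, |ψ z| ≤ B * ‖z‖)
    (hL : ∀ x y, 2 * ‖x - y‖ < ‖y‖ → ‖y‖ ≤ ‖x‖ → |ψ x - ψ y| ≤ L * ‖x - y‖) :
    ∃ K, LipschitzWith K ψ := by
  have key : ∀ x y, ‖y‖ ≤ ‖x‖ → |ψ x - ψ y| ≤ max (5 * B) L * ‖x - y‖ := by
    intro x y hyx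
    by_cases hnear : 2 * ‖x - y‖ < ‖y‖
    · exact (hL x y hnear hyx).trans (by gcongr; exact le_max_right _ _)
    · have hx : ‖x‖ ≤ ‖y‖ + ‖x - y‖ := norm_le_insert' x y
      calc |ψ x - ψ y| ≤ |ψ x| + |ψ y| := abs_sub _ _
        _ ≤ B * ‖x‖ + B * ‖y‖ := add_le_add (hB x) (hB y)
        _ ≤ 5 * B * ‖x - y‖ := by nlinarith
        _ ≤ max (5 * B) L * ‖x - y‖ := by gcongr; exact le_max_left _ _
  refine ⟨_, LipschitzWith.of_dist_le' (K := max (5 * B) L) fun x y => ?_⟩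
  rw [Real.dist_eq, dist_eq_norm]
  rcases le_total ‖y‖ ‖x‖ with hyx | hxy
  · exact key x y hyx
  · rw [abs_sub_comm, norm_sub_rev]
    exact key y x hxy

theorem abs_inv_sub_inv_le {u v a c d m D : ℝ} (hm : 0 < m) (ha : 0 < a) (hc : 0 < c)
    (hD : 0 ≤ D) (hd : 0 ≤ d) (hac : a ≤ 2 * c) (hu : m / a ≤ u) (hv : m / c ≤ v)
    (huv : |u - v| ≤ D / c ^ 2 * d) : |u⁻¹ - v⁻¹| ≤ 2 * D / m ^ 2 * d := by
  have hu₀ : 0 < u := (div_pos hm ha).trans_le hu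
  have hv₀ : 0 < v := (div_pos hm hc).trans_le hv
  have huv₀ : m ^ 2 / (2 * c ^ 2) ≤ u * v := calc
    m ^ 2 / (2 * c ^ 2) ≤ m / a * (m / c) := by
      rw [div_mul_div_comm, ← sq]
      exact div_le_div_of_nonneg_left (sq_nonneg m) (by positivity) (by nlinarith)
    _ ≤ u * v := mul_le_mul hu hv (by positivity) hu₀.le
  rw [inv_sub_inv hu₀.ne' hv₀.ne', abs_div, abs_of_pos (mul_pos hu₀ hv₀), abs_sub_comm,
    div_le_iff₀ (mul_pos hu₀ hv₀)]
  calc |u - v| ≤ D / c ^ 2 * d := huv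
    _ = 2 * D / m ^ 2 * d * (m ^ 2 / (2 * c ^ 2)) := by field_simp
    _ ≤ 2 * D / m ^ 2 * d * (u * v) := by gcongr

variable {E : Type*} [NormedAddCommGroup E] [NormedSpace ℝ E]

theorem exists_bump_eq_one_on_closedBall {n : ℕ∞} {b₀ : E → ℝ} {K₀ : NNReal}
    (hsmooth : ContDiff ℝ n b₀) (hlip : LipschitzWith K₀ b₀) (hbdd : IsBounded (support b₀))
    (hne : (support b₀).Nonempty) :
    ∃ b : E → ℝ, ∃ K : NNReal, ∃ δ R : ℝ, 0 < δ ∧ 0 < R ∧ ContDiff ℝ n b ∧ LipschitzWith K b ∧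
      (∀ z, 0 ≤ b z ∧ b z ≤ 1) ∧ (∀ z, ‖z‖ ≤ δ → b z = 1) ∧ (∀ z, R ≤ ‖z‖ → b z = 0) := by
  obtain ⟨x₀, hx₀⟩ := hne
  obtain ⟨r, hr, hsupp⟩ := hbdd.subset_closedBall_lt 0 0
  -- `u` is `2` at the origin and `-2` off the translated support, so `smoothTransition ∘ u` is
  -- `1` near the origin and `0` far away.
  set u : E → ℝ := fun z => (4 / b₀ x₀) * b₀ (z + x₀) - 2 with hu
  have hu_smooth : ContDiff ℝ n u :=
    (contDiff_const.mul (hsmooth.comp (contDiff_id.add contDiff_const))).sub contDiff_const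
  have hu_lip : LipschitzWith (‖4 / b₀ x₀‖₊ * (K₀ * (1 + 0)) + 0) u :=
    ((lipschitzWith_smul _).comp (hlip.comp (LipschitzWith.id.add (LipschitzWith.const x₀)))).sub
      (LipschitzWith.const 2)
  have hu_zero : u 0 = 2 := by
    simp only [hu, zero_add, div_mul_cancel₀ _ hx₀]
    norm_num
  obtain ⟨ε, hε, hball⟩ : ∃ ε > 0, ∀ z, dist z 0 < ε → 1 < u z :=
    Metric.eventually_nhds_iff.mp
      ((hu_smooth.continuous.tendsto 0).eventually_const_lt (by linarith))
  obtain ⟨K, hK⟩ := smoothTransition.exists_lipschitzWith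
  refine ⟨smoothTransition ∘ u, K * _, ε / 2, r + ‖x₀‖ + 1, by positivity, by positivity,
    smoothTransition.contDiff.comp hu_smooth, hK.comp hu_lip,
    fun z => ⟨smoothTransition.nonneg _, smoothTransition.le_one _⟩, fun z hz => ?_, fun z hz => ?_⟩
  · exact smoothTransition.one_of_one_le (hball z (by rw [dist_zero_right]; linarith)).le
  · have hout : b₀ (z + x₀) = 0 := by
      by_contra h
      have h₁ := mem_closedBall_zero_iff.mp (hsupp h)
      have h₂ := norm_sub_le (z + x₀) x₀
      rw [add_sub_cancel_right] at h₂
      linarith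
    exact smoothTransition.zero_of_nonpos (by simp [hu, hout])

theorem exists_lipschitz_bump_of_le_norm {n : ℕ∞} {ψ : E → ℝ} {K : NNReal} {a : ℝ}
    (hlip : LipschitzWith K ψ) (hsmooth : ContDiffOn ℝ n ψ {0}ᶜ) (hzero : ψ 0 = 0) (ha : 0 < a)
    (hlower : ∀ z, a * ‖z‖ ≤ ψ z) :
    ∃ b : E → ℝ, ContDiff ℝ n b ∧ (∃ C : NNReal, LipschitzWith C b) ∧
      IsBounded (closure (support b)) ∧ (support b).Nonempty := by
  set b : E → ℝ := fun z => smoothTransition (2 - ψ z) with hb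
  have hb_one : ∀ᶠ z in 𝓝 0, b z = 1 := by
    filter_upwards [(hlip.continuous.tendsto 0).eventually_lt_const
      (show ψ 0 < 1 by linarith)] with z hz
    exact smoothTransition.one_of_one_le (by linarith)
  have hb_supp : support b ⊆ closedBall 0 (2 / a) := by
    intro z hz
    have : ψ z < 2 := by
      by_contra h
      exact hz (smoothTransition.zero_of_nonpos (by linarith))
    rw [mem_closedBall_zero_iff, le_div_iff₀ ha]
    linarith [hlower z]
  obtain ⟨Kθ, hKθ⟩ := smoothTransition.exists_lipschitzWith
  refine ⟨b, contDiff_iff_contDiffAt.mpr fun z => ?_,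
    ⟨_, hKθ.comp ((LipschitzWith.const 2).sub hlip)⟩, (isBounded_closedBall.subset hb_supp).closure,
    0, by simp [hb, hzero, smoothTransition.one_of_one_le]⟩
  rcases eq_or_ne z 0 with rfl | hz
  · exact contDiffAt_const.congr_of_eventuallyEq hb_one
  · exact smoothTransition.contDiffAt.comp z
      (contDiffAt_const.sub (hsmooth.contDiffAt (isOpen_compl_singleton.mem_nhds hz)))

noncomputable def radialIntegral (b : E → ℝ) (x : E) : ℝ := ∫ t : ℝ, b (t • x)

theorem radialIntegral_smul (b : E → ℝ) (s : ℝ) (x : E) :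
    radialIntegral b (s • x) = |s|⁻¹ * radialIntegral b x := by
  simp only [radialIntegral, smul_smul, Measure.integral_comp_mul_right (fun t => b (t • x)),
    abs_inv, smul_eq_mul]

-- At `x = 0` the integrand is the constant `b 0`, whose integral over `ℝ` is `0` by convention,
-- so `radialGauge b 0 = 0`.
noncomputable def radialGauge (b : E → ℝ) (x : E) : ℝ := (radialIntegral b x)⁻¹

theorem radialGauge_smul (b : E → ℝ) (t : ℝ) (x : E) :
    radialGauge b (t • x) = |t| * radialGauge b x := by
  rw [radialGauge, radialGauge, radialIntegral_smul, mul_inv, inv_inv]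

theorem radialGauge_zero (b : E → ℝ) : radialGauge b 0 = 0 := by
  simpa using radialGauge_smul b 0 0

variable {b : E → ℝ} {δ R : ℝ}

theorem apply_smul_eq_zero_of_notMem_Icc (hzero : ∀ z, R ≤ ‖z‖ → b z = 0) {x : E} {t T : ℝ}
    (hT : R ≤ T * ‖x‖) (ht : t ∉ Icc (-T) T) : b (t • x) = 0 := by
  apply hzero
  rw [norm_smul, Real.norm_eq_abs]
  have : T ≤ |t| := by
    rw [mem_Icc, not_and_or, not_le, not_le] at ht
    rcases ht with ht | ht
    · linarith [neg_le_abs t]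
    · linarith [le_abs_self t]
  nlinarith [norm_nonneg x]

theorem radialIntegral_eq_setIntegral_Icc (hzero : ∀ z, R ≤ ‖z‖ → b z = 0) {x : E} {T : ℝ}
    (hT : R ≤ T * ‖x‖) : radialIntegral b x = ∫ t in Icc (-T) T, b (t • x) :=
  (setIntegral_eq_integral_of_forall_compl_eq_zero fun _ ht =>
    apply_smul_eq_zero_of_notMem_Icc hzero hT ht).symm

theorem abs_radialIntegral_le (hb : ∀ z, |b z| ≤ 1) (hzero : ∀ z, R ≤ ‖z‖ → b z = 0) (hR : 0 ≤ R)
    {x : E} (hx : x ≠ 0) : |radialIntegral b x| ≤ 2 * R / ‖x‖ := by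
  have hx' : 0 < ‖x‖ := norm_pos_iff.mpr hx
  rw [radialIntegral_eq_setIntegral_Icc hzero (T := R / ‖x‖) (div_mul_cancel₀ R hx'.ne').ge]
  calc |∫ t in Icc (-(R / ‖x‖)) (R / ‖x‖), b (t • x)|
      ≤ 1 * volume.real (Icc (-(R / ‖x‖)) (R / ‖x‖)) := by
        rw [← Real.norm_eq_abs]
        exact norm_setIntegral_le_of_norm_le_const measure_Icc_lt_top fun t _ => hb (t • x)
    _ = 2 * R / ‖x‖ := by
        rw [Real.volume_real_Icc_of_le (by have := div_nonneg hR hx'.le; linarith)]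
        ring

theorem le_radialIntegral (hb : Continuous b) (hb₀ : ∀ z, 0 ≤ b z) (hzero : ∀ z, R ≤ ‖z‖ → b z = 0)
    (hδ : 0 ≤ δ) (hone : ∀ z, ‖z‖ ≤ δ → 1 ≤ b z) {x : E} (hx : x ≠ 0) :
    2 * δ / ‖x‖ ≤ radialIntegral b x := by
  have hx' : 0 < ‖x‖ := norm_pos_iff.mpr hx
  set m := δ / ‖x‖
  set T := max δ R / ‖x‖
  have hcont : Continuous fun t : ℝ => b (t • x) := hb.comp (continuous_id.smul continuous_const)
  rw [radialIntegral_eq_setIntegral_Icc hzero (T := T)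
    (by rw [div_mul_cancel₀ _ hx'.ne']; exact le_max_right _ _)]
  have hmT : m ≤ T := div_le_div_of_nonneg_right (le_max_left _ _) hx'.le
  calc 2 * δ / ‖x‖ = ∫ _ in Icc (-m) m, (1 : ℝ) := by
        rw [setIntegral_const,
          Real.volume_real_Icc_of_le (by have := div_nonneg hδ hx'.le; linarith)]
        simp only [smul_eq_mul, mul_one, m]
        ring
    _ ≤ ∫ t in Icc (-m) m, b (t • x) := by
        refine setIntegral_mono_on (integrableOn_const measure_Icc_lt_top.ne)
          hcont.integrableOn_Icc measurableSet_Icc fun t ht => hone _ ?_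
        rw [norm_smul, Real.norm_eq_abs, ← le_div_iff₀ hx']
        exact abs_le.mpr ht
    _ ≤ ∫ t in Icc (-T) T, b (t • x) :=
        setIntegral_mono_set hcont.integrableOn_Icc (Eventually.of_forall fun t => hb₀ _)
          (Icc_subset_Icc (by linarith) hmT).eventuallyLE

theorem abs_radialIntegral_sub_le {K : NNReal} (hb : LipschitzWith K b)
    (hzero : ∀ z, R ≤ ‖z‖ → b z = 0) (hR : 0 ≤ R) {x y : E} (hy : y ≠ 0) (hyx : ‖y‖ ≤ ‖x‖) :
    |radialIntegral b x - radialIntegral b y| ≤ 2 * K * R ^ 2 / ‖y‖ ^ 2 * ‖x - y‖ := by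
  have hy' : 0 < ‖y‖ := norm_pos_iff.mpr hy
  set T := R / ‖y‖
  have hT₀ : 0 ≤ T := div_nonneg hR hy'.le
  have hTy : R ≤ T * ‖y‖ := (div_mul_cancel₀ R hy'.ne').ge
  have hTx : R ≤ T * ‖x‖ := hTy.trans (mul_le_mul_of_nonneg_left hyx hT₀)
  have hcont : ∀ w : E, Continuous fun t : ℝ => b (t • w) :=
    fun w => hb.continuous.comp (continuous_id.smul continuous_const)
  rw [radialIntegral_eq_setIntegral_Icc hzero hTx, radialIntegral_eq_setIntegral_Icc hzero hTy,
    ← integral_sub (hcont x).integrableOn_Icc (hcont y).integrableOn_Icc]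
  calc |∫ t in Icc (-T) T, (b (t • x) - b (t • y))|
      ≤ K * T * ‖x - y‖ * volume.real (Icc (-T) T) := by
        rw [← Real.norm_eq_abs]
        refine norm_setIntegral_le_of_norm_le_const measure_Icc_lt_top fun t ht => ?_
        calc ‖b (t • x) - b (t • y)‖ ≤ K * ‖t • x - t • y‖ := by
              simpa only [dist_eq_norm] using hb.dist_le_mul (t • x) (t • y)
          _ = K * (|t| * ‖x - y‖) := by rw [← smul_sub, norm_smul, Real.norm_eq_abs]
          _ ≤ K * (T * ‖x - y‖) := by gcongr; exact abs_le.mpr ht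
          _ = K * T * ‖x - y‖ := by ring
    _ = 2 * K * R ^ 2 / ‖y‖ ^ 2 * ‖x - y‖ := by
        rw [Real.volume_real_Icc_of_le (by linarith)]
        simp only [T]
        ring

theorem contDiffOn_radialIntegral {n : ℕ∞} (hb : ContDiff ℝ n b) (hzero : ∀ z, R ≤ ‖z‖ → b z = 0) :
    ContDiffOn ℝ n (radialIntegral b) {0}ᶜ := by
  -- Smoothness of parametric integrals is available for convolutions: `radialIntegral b x` is
  -- the convolution of `t ↦ b (t • x)` with the constant `1`, evaluated at `0`.
  have hconv : radialIntegral b = fun x =>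
      ((fun t : ℝ => b (t • x)) ⋆[ContinuousLinearMap.lsmul ℝ ℝ, volume] fun _ => (1 : ℝ)) 0 := by
    ext x
    simp [radialIntegral, convolution_def]
  refine contDiffOn_of_locally_contDiffOn fun x₀ hx₀ => ?_
  have hx₀' : 0 < ‖x₀‖ := norm_pos_iff.mpr hx₀
  set T := 2 * max R 0 / ‖x₀‖
  refine ⟨{x | ‖x₀‖ / 2 < ‖x‖}, isOpen_lt continuous_const continuous_norm,
    show ‖x₀‖ / 2 < ‖x₀‖ by linarith, ?_⟩
  rw [hconv]
  refine (contDiffOn_convolution_left_with_param_comp _ contDiffOn_const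
    (isOpen_lt continuous_const continuous_norm) (isCompact_Icc (a := -T) (b := T))
    (fun x t hx ht => apply_smul_eq_zero_of_notMem_Icc hzero ?_ ht) (locallyIntegrable_const 1)
    (hb.comp (contDiff_snd.smul contDiff_fst)).contDiffOn).mono inter_subset_right
  calc R ≤ max R 0 := le_max_left _ _
    _ = T * (‖x₀‖ / 2) := by simp only [T]; field_simp
    _ ≤ T * ‖x‖ := mul_le_mul_of_nonneg_left (le_of_lt hx) (by positivity)

theorem radialIntegral_pos (hb : Continuous b) (hb₀ : ∀ z, 0 ≤ b z)
    (hzero : ∀ z, R ≤ ‖z‖ → b z = 0) (hδ : 0 < δ) (hone : ∀ z, ‖z‖ ≤ δ → 1 ≤ b z) {x : E}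
    (hx : x ≠ 0) : 0 < radialIntegral b x :=
  (div_pos (by positivity) (norm_pos_iff.mpr hx)).trans_le
    (le_radialIntegral hb hb₀ hzero hδ.le hone hx)

theorem radialGauge_mem_Icc (hb : Continuous b) (hb₀₁ : ∀ z, 0 ≤ b z ∧ b z ≤ 1)
    (hzero : ∀ z, R ≤ ‖z‖ → b z = 0) (hR : 0 ≤ R) (hδ : 0 < δ)
    (hone : ∀ z, ‖z‖ ≤ δ → 1 ≤ b z) (x : E) :
    radialGauge b x ∈ Icc ((2 * R)⁻¹ * ‖x‖) ((2 * δ)⁻¹ * ‖x‖) := by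
  rcases eq_or_ne x 0 with rfl | hx
  · simp [radialGauge_zero]
  have hb₀ := fun z => (hb₀₁ z).1
  have hpos := radialIntegral_pos hb hb₀ hzero hδ hone hx
  have hupper : radialIntegral b x ≤ 2 * R / ‖x‖ :=
    (le_abs_self _).trans (abs_radialIntegral_le
      (fun z => abs_le.mpr ⟨by linarith [hb₀₁ z], (hb₀₁ z).2⟩) hzero hR hx)
  constructor
  · simpa [radialGauge, div_eq_mul_inv, mul_comm] using inv_anti₀ hpos hupper
  · simpa [radialGauge, div_eq_mul_inv, mul_comm] using
      inv_anti₀ (by positivity) (le_radialIntegral hb hb₀ hzero hδ.le hone hx)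

theorem contDiffOn_radialGauge {n : ℕ∞} (hsmooth : ContDiff ℝ n b) (hb₀ : ∀ z, 0 ≤ b z)
    (hzero : ∀ z, R ≤ ‖z‖ → b z = 0) (hδ : 0 < δ) (hone : ∀ z, ‖z‖ ≤ δ → 1 ≤ b z) :
    ContDiffOn ℝ n (radialGauge b) {0}ᶜ :=
  (contDiffOn_radialIntegral hsmooth hzero).inv fun _ hx =>
    (radialIntegral_pos hsmooth.continuous hb₀ hzero hδ hone hx).ne'

theorem exists_lipschitzWith_radialGauge {K : NNReal} (hlip : LipschitzWith K b)
    (hb₀₁ : ∀ z, 0 ≤ b z ∧ b z ≤ 1) (hzero : ∀ z, R ≤ ‖z‖ → b z = 0) (hR : 0 ≤ R)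
    (hδ : 0 < δ) (hone : ∀ z, ‖z‖ ≤ δ → 1 ≤ b z) :
    ∃ C, LipschitzWith C (radialGauge b) := by
  have hb₀ := fun z => (hb₀₁ z).1
  have hbounds := radialGauge_mem_Icc hlip.continuous hb₀₁ hzero hR hδ hone
  refine exists_lipschitzWith_of_abs_le_mul_norm (B := (2 * δ)⁻¹)
    (L := 2 * (2 * K * R ^ 2) / (2 * δ) ^ 2) (by positivity)
    (fun z => ?_) fun x y hnear hyx => ?_
  · rw [abs_of_nonneg ((by positivity : (0 : ℝ) ≤ (2 * R)⁻¹ * ‖z‖).trans (hbounds z).1)]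
    exact (hbounds z).2
  · have hy : 0 < ‖y‖ := (by positivity : 0 ≤ 2 * ‖x - y‖).trans_lt hnear
    have hx : 0 < ‖x‖ := hy.trans_le hyx
    exact abs_inv_sub_inv_le (by positivity) hx hy (by positivity) (norm_nonneg _)
      (by linarith [norm_le_insert' x y])
      (le_radialIntegral hlip.continuous hb₀ hzero hδ.le hone (norm_pos_iff.mp hx))
      (le_radialIntegral hlip.continuous hb₀ hzero hδ.le hone (norm_pos_iff.mp hy))
      (abs_radialIntegral_sub_le hlip hzero hR (norm_pos_iff.mp hy) hyx)

end

theorem lipschitz_smooth_bump_iff_homogeneous_smooth_equivalent_norm_general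
    {Z : Type*} [NormedAddCommGroup Z] [NormedSpace ℝ Z]
    (p : ℕ∞) :
    (∃ b : Z → ℝ, ContDiff ℝ p b ∧ (∃ C : NNReal, LipschitzWith C b) ∧
        IsBounded (closure (support b)) ∧ (support b).Nonempty) ↔
    (∃ a b : ℝ, 0 < a ∧ 0 < b ∧
      ∃ ψ : Z → ℝ, (∃ C : NNReal, LipschitzWith C ψ) ∧ (∀ z : Z, 0 ≤ ψ z) ∧
        ContDiffOn ℝ p ψ {0}ᶜ ∧
        (∀ (t : ℝ) (z : Z), ψ (t • z) = |t| * ψ z) ∧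
        (∀ z : Z, a * ‖z‖ ≤ ψ z ∧ ψ z ≤ b * ‖z‖)) := by
  constructor
  · rintro ⟨b₀, hsmooth₀, ⟨K₀, hlip₀⟩, hbdd, hne⟩
    obtain ⟨b, K, δ, R, hδ, hR, hsmooth, hlip, hb₀₁, hone, hzero⟩ :=
      exists_bump_eq_one_on_closedBall hsmooth₀ hlip₀ (hbdd.subset subset_closure) hne
    have hone' : ∀ z, ‖z‖ ≤ δ → 1 ≤ b z := fun z hz => (hone z hz).ge
    have hbounds := radialGauge_mem_Icc hlip.continuous hb₀₁ hzero hR.le hδ hone'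
    exact ⟨_, _, by positivity, by positivity, radialGauge b,
      exists_lipschitzWith_radialGauge hlip hb₀₁ hzero hR.le hδ hone',
      fun z => (by positivity : (0 : ℝ) ≤ (2 * R)⁻¹ * ‖z‖).trans (hbounds z).1,
      contDiffOn_radialGauge hsmooth (fun z => (hb₀₁ z).1) hzero hδ hone',
      radialGauge_smul b, hbounds⟩
  · rintro ⟨a, _, ha, -, ψ, ⟨K, hlip⟩, -, hsmooth, hhom, hbounds⟩
    exact exists_lipschitz_bump_of_le_norm hlip hsmooth (by simpa using hhom 0 0) ha
      fun z => (hbounds z).1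

/-- Proposition 1: a Banach space `Z` admits a `C^p`-smooth, Lipschitz bump function iff
there are `a, b > 0` and a Lipschitz function `ψ : Z → [0,∞)`, `C^p`-smooth away from `0`,
homogeneous, with `a‖·‖ ≤ ψ ≤ b‖·‖`. -/
theorem lipschitz_smooth_bump_iff_homogeneous_smooth_equivalent_norm
    {Z : Type*} [NormedAddCommGroup Z] [NormedSpace ℝ Z] [CompleteSpace Z]
    (p : ℕ∞) (hp : 1 ≤ p) :
    (∃ b : Z → ℝ, ContDiff ℝ p b ∧ (∃ C : NNReal, LipschitzWith C b) ∧
        IsBounded (closure (support b)) ∧ (support b).Nonempty) ↔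
    (∃ a b : ℝ, 0 < a ∧ 0 < b ∧
      ∃ ψ : Z → ℝ, (∃ C : NNReal, LipschitzWith C ψ) ∧ (∀ z : Z, 0 ≤ ψ z) ∧
        ContDiffOn ℝ p ψ {0}ᶜ ∧
        (∀ (t : ℝ) (z : Z), ψ (t • z) = |t| * ψ z) ∧
        (∀ z : Z, a * ‖z‖ ≤ ψ z ∧ ψ z ≤ b * ‖z‖)) :=
  lipschitz_smooth_bump_iff_homogeneous_smooth_equivalent_norm_general p
end

section
/- Let X be a Banach space with Schauder basis {e_j} with coordinate functionals {e_j*} and canonical projections P_n(x) = Σ_{j=1}^n e_j*(x) e_j (P_0 = 0), with unconditional basis constant 1, i.e., for every x = Σ_j x_j e_j ∈ X and every scalar sequence (λ_j) with |λ_j| ≤ 1 for all j, the series Σ_j λ_j x_j e_j converges and ‖Σ_j λ_j x_j e_j‖ ≤ ‖x‖. Let M ≥ 1 and let μ_A : X → [0,∞) satisfy (1/M)‖x‖ ≤ μ_A(x) ≤ M‖x‖ for all x ∈ X. Let φ : ℝ → [0,1] be continuous with φ(t) = 1 for |t| < 1/2 and φ(t) = 0 for |t| > 1, let r > 0, and define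 χ_n(x) = 1 − φ(μ_A(x − P_{n−1}(x))/r) and Ψ(x) = Σ_n χ_n(x) e_n*(x) e_n. Then ‖x − Ψ(x)‖ ≤ Mr for every x ∈ X. -/
open Filter Topology

/-- Estimate (2.6): for a basis with unconditional basis constant 1, the map
`Ψ(x) = Σₙ χₙ(x) eₙ*(x) eₙ` satisfies `‖x - Ψ x‖ ≤ M r`. -/
theorem norm_sub_psi_le
    {X : Type*} [NormedAddCommGroup X] [NormedSpace ℝ X] [CompleteSpace X]
    (e : ℕ → X) (estar : ℕ → X →L[ℝ] ℝ)
    (hbio : ∀ i j : ℕ, estar i (e j) = if i = j then 1 else 0)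
    (hbasis : ∀ x : X,
      Tendsto (fun n : ℕ => ∑ j ∈ Finset.range n, estar j x • e j) atTop (𝓝 x))
    (huncond : ∀ (x : X) (lam : ℕ → ℝ), (∀ j : ℕ, |lam j| ≤ 1) →
      ∃ y : X, Tendsto (fun n : ℕ => ∑ j ∈ Finset.range n, (lam j * estar j x) • e j)
          atTop (𝓝 y) ∧ ‖y‖ ≤ ‖x‖)
    (M : ℝ) (hM : 1 ≤ M)
    (μA : X → ℝ) (hμ_nonneg : ∀ x : X, 0 ≤ μA x)
    (hμ_lower : ∀ x : X, (1 / M) * ‖x‖ ≤ μA x)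
    (hμ_upper : ∀ x : X, μA x ≤ M * ‖x‖)
    (φ : ℝ → ℝ) (hφ_cont : Continuous φ)
    (hφ_mem : ∀ t : ℝ, φ t ∈ Set.Icc (0 : ℝ) 1)
    (hφ_one : ∀ t : ℝ, |t| < 1 / 2 → φ t = 1)
    (hφ_zero : ∀ t : ℝ, 1 < |t| → φ t = 0)
    (r : ℝ) (hr : 0 < r)
    (chi : ℕ → X → ℝ)
    (hchi : ∀ (n : ℕ) (x : X),
      chi n x = 1 - φ (μA (x - ∑ j ∈ Finset.range n, estar j x • e j) / r))
    (Ψ : X → X)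
    (hΨ : ∀ x : X, Ψ x = ∑' n : ℕ, (chi n x * estar n x) • e n) :
    ∀ x : X, ‖x - Ψ x‖ ≤ M * r := by
  intro x
  have hMpos : (0 : ℝ) < M := lt_of_lt_of_le one_pos hM
  set P : ℕ → X := fun n => ∑ j ∈ Finset.range n, estar j x • e j with hPdef
  set lam : ℕ → ℝ := fun n => φ (μA (x - P n) / r) with hlamdef
  have hlam_abs : ∀ n, |lam n| ≤ 1 := by
    intro n
    have h := hφ_mem (μA (x - P n) / r)
    rw [abs_le]
    exact ⟨by linarith [h.1], h.2⟩
  have hchi' : ∀ n, chi n x = 1 - lam n := fun n => hchi n x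
  -- eventually lam n = 1
  have htend : Tendsto (fun n => ‖x - P n‖) atTop (𝓝 0) := by
    have h2 : Tendsto (fun n => x - P n) atTop (𝓝 (x - x)) :=
      tendsto_const_nhds.sub (hbasis x)
    rw [sub_self] at h2
    simpa using h2.norm
  obtain ⟨N, hN⟩ : ∃ N, ∀ n ≥ N, ‖x - P n‖ < r / (2 * M) := by
    have := (htend.eventually (gt_mem_nhds (show (0:ℝ) < r / (2*M) by positivity)))
    exact eventually_atTop.mp this
  have hlam_one : ∀ n ≥ N, lam n = 1 := by
    intro n hn
    apply hφ_one
    have h1 : μA (x - P n) ≤ M * ‖x - P n‖ := hμ_upper _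
    have h2 : M * ‖x - P n‖ < M * (r / (2 * M)) := by
      exact mul_lt_mul_of_pos_left (hN n hn) hMpos
    have h3 : M * (r / (2 * M)) = r / 2 := by field_simp
    have h4 : μA (x - P n) < r / 2 := by linarith
    rw [abs_of_nonneg (div_nonneg (hμ_nonneg _) hr.le)]
    rw [div_lt_iff₀ hr]
    linarith
  -- Ψ x is a finite sum
  have hΨfin : Ψ x = ∑ n ∈ Finset.range N, (chi n x * estar n x) • e n := by
    rw [hΨ x]
    apply tsum_eq_sum
    intro n hn
    have : chi n x = 0 := by
      rw [hchi' n, hlam_one n (le_of_not_gt (fun h => hn (Finset.mem_range.mpr h)))]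
      ring
    simp [this]
  -- partial sums of lam-series converge to x - Ψ x
  have hpartial : ∀ m ≥ N,
      ∑ j ∈ Finset.range m, (lam j * estar j x) • e j = P m - Ψ x := by
    intro m hm
    rw [hΨfin]
    have hext : ∑ n ∈ Finset.range N, (chi n x * estar n x) • e n
        = ∑ n ∈ Finset.range m, (chi n x * estar n x) • e n := by
      apply Finset.sum_subset (Finset.range_subset_range.mpr hm)
      intro n _ hn
      have : chi n x = 0 := by
        rw [hchi' n, hlam_one n (le_of_not_gt (fun h => hn (Finset.mem_range.mpr h)))]
        ring
      simp [this]
    rw [hext, hPdef]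
    rw [← Finset.sum_sub_distrib]
    apply Finset.sum_congr rfl
    intro j _
    rw [← sub_smul, hchi' j]
    ring_nf
  have htend2 : Tendsto (fun m => ∑ j ∈ Finset.range m, (lam j * estar j x) • e j)
      atTop (𝓝 (x - Ψ x)) := by
    have h1 : Tendsto (fun m => P m - Ψ x) atTop (𝓝 (x - Ψ x)) :=
      (hbasis x).sub tendsto_const_nhds
    apply h1.congr'
    filter_upwards [eventually_atTop.mpr ⟨N, fun m hm => hpartial m hm⟩] with m hm
    exact hm.symm
  -- n0 : first index where lam ≠ 0
  have hex : ∃ n, lam n ≠ 0 := ⟨N, by rw [hlam_one N le_rfl]; norm_num⟩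
  set n0 := Nat.find hex with hn0def
  have hn0 : lam n0 ≠ 0 := Nat.find_spec hex
  have hn0min : ∀ m < n0, lam m = 0 := fun m hm => by
    by_contra h; exact absurd (Nat.find_le h) (not_le.mpr hm)
  set z := x - P n0 with hzdef
  -- coordinates of z
  have hcoord : ∀ n, lam n * estar n z = lam n * estar n x := by
    intro n
    rcases lt_or_ge n n0 with h | h
    · rw [hn0min n h]; ring
    · have : estar n (P n0) = 0 := by
        rw [hPdef]
        simp only [map_sum, map_smul]
        rw [Finset.sum_eq_zero]
        intro j hj
        have hjn : n ≠ j := by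
          intro hEq; rw [hEq] at h; exact absurd (Finset.mem_range.mp hj) (not_lt.mpr h)
        rw [hbio n j, if_neg hjn]
        simp
      rw [hzdef]
      simp [this]
  obtain ⟨y, hty, hy⟩ := huncond z lam hlam_abs
  have hty' : Tendsto (fun m => ∑ j ∈ Finset.range m, (lam j * estar j x) • e j)
      atTop (𝓝 y) := by
    apply hty.congr
    intro m
    apply Finset.sum_congr rfl
    intro j _
    rw [hcoord j]
  have hyeq : y = x - Ψ x := tendsto_nhds_unique hty' htend2
  -- final estimate
  have hμz : μA z ≤ r := by
    by_contra h
    push_neg at h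
    apply hn0
    rw [hlamdef]
    apply hφ_zero
    rw [abs_of_nonneg (div_nonneg (hμ_nonneg _) hr.le)]
    rw [lt_div_iff₀ hr]
    linarith
  have hz_norm : ‖z‖ ≤ M * μA z := by
    have := hμ_lower z
    have h1 : (1 / M) * ‖z‖ ≤ μA z := this
    calc ‖z‖ = M * ((1/M) * ‖z‖) := by field_simp
    _ ≤ M * μA z := mul_le_mul_of_nonneg_left h1 (le_of_lt hMpos)
  calc ‖x - Ψ x‖ = ‖y‖ := by rw [hyeq]
  _ ≤ ‖z‖ := hy
  _ ≤ M * μA z := hz_norm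
  _ ≤ M * r := mul_le_mul_of_nonneg_left hμz (le_of_lt hMpos)
end

section
/- Let X be a Banach space, let P : X → X be a bounded linear projection with ‖P‖ ≤ 1, let M ≥ 1, and let μ_A : X → [0,∞) be Lipschitz, C^p-smooth on X \ {0}, with (1/M)‖x‖ ≤ μ_A(x) ≤ M‖x‖ and ‖μ_A′(x)‖ ≤ M for all x ≠ 0. Let φ : ℝ → [0,1] be a C^∞-smooth function with φ(t) = 1 for |t| < 1/2, φ(t) = 0 for |t| > 1, and |φ′(t)| ≤ 3 for all t. For r > 0 define χ(x) = 1 − φ(μ_A(x − P(x))/r). Then χ : X → [0,1] is C^p-smooth and its Fréchet derivative satisfies ‖χ′(x)‖ ≤ 6M/r for every x ∈ X. -/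
/-- The cut-off `χ(x) = 1 - φ(μ_A(x - Px)/r)` is `C^p`-smooth with values in `[0,1]` and
its Fréchet derivative satisfies `‖χ'(x)‖ ≤ 6M/r`. -/
theorem cutoff_smooth_and_deriv_bound
    {X : Type*} [NormedAddCommGroup X] [NormedSpace ℝ X] [CompleteSpace X]
    (p : ℕ∞) (hp : 1 ≤ p)
    (P : X →L[ℝ] X) (hP_proj : ∀ x : X, P (P x) = P x) (hP_norm : ‖P‖ ≤ 1)
    (M : ℝ) (hM : 1 ≤ M)
    (μA : X → ℝ) (hμ_lip : ∃ C : NNReal, LipschitzWith C μA)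
    (hμ_smooth : ContDiffOn ℝ p μA {(0 : X)}ᶜ)
    (hμ_nonneg : ∀ x : X, 0 ≤ μA x)
    (hμ_lower : ∀ x : X, (1 / M) * ‖x‖ ≤ μA x)
    (hμ_upper : ∀ x : X, μA x ≤ M * ‖x‖)
    (hμ_deriv : ∀ x : X, x ≠ 0 → ‖fderiv ℝ μA x‖ ≤ M)
    (φ : ℝ → ℝ) (hφ_smooth : ContDiff ℝ (⊤ : ℕ∞) φ)
    (hφ_mem : ∀ t : ℝ, φ t ∈ Set.Icc (0 : ℝ) 1)
    (hφ_one : ∀ t : ℝ, |t| < 1 / 2 → φ t = 1)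
    (hφ_zero : ∀ t : ℝ, 1 < |t| → φ t = 0)
    (hφ_deriv : ∀ t : ℝ, |deriv φ t| ≤ 3)
    (r : ℝ) (hr : 0 < r)
    (chi : X → ℝ) (hchi : ∀ x : X, chi x = 1 - φ (μA (x - P x) / r)) :
    (∀ x : X, chi x ∈ Set.Icc (0 : ℝ) 1) ∧
    ContDiff ℝ p chi ∧
    ∀ x : X, ‖fderiv ℝ chi x‖ ≤ 6 * M / r := by

  have hM0 : (0:ℝ) < M := lt_of_lt_of_le one_pos hM
  set Q : X →L[ℝ] X := ContinuousLinearMap.id ℝ X - P with hQdef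
  have hQapp : ∀ y : X, Q y = y - P y := fun y => by simp [hQdef]
  have hQnorm : ‖Q‖ ≤ 2 := by
    calc ‖Q‖ ≤ ‖ContinuousLinearMap.id ℝ X‖ + ‖P‖ := norm_sub_le _ _
    _ ≤ 1 + 1 := add_le_add ContinuousLinearMap.norm_id_le hP_norm
    _ = 2 := by norm_num
  have hchi' : chi = fun y => 1 - φ (μA (Q y) / r) := by
    funext y; rw [hchi y, hQapp y]
  have hbound0 : (0:ℝ) ≤ 6 * M / r := by positivity
  -- key pointwise claim
  have key : ∀ x : X, ContDiffAt ℝ p chi x ∧ ‖fderiv ℝ chi x‖ ≤ 6 * M / r := by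
    intro x
    by_cases h1 : ‖Q x‖ < r / (2 * M)
    · -- chi vanishes near x
      have hS : IsOpen {y : X | ‖Q y‖ < r / (2 * M)} := by
        have : Continuous fun y : X => ‖Q y‖ := Q.continuous.norm
        exact isOpen_lt this continuous_const
      have hEq : ∀ y ∈ {y : X | ‖Q y‖ < r / (2 * M)}, chi y = 0 := by
        intro y hy
        have hy' : ‖Q y‖ < r / (2 * M) := hy
        have hμy : μA (Q y) < r / 2 := by
          have h2 := hμ_upper (Q y)
          have : M * ‖Q y‖ < M * (r / (2 * M)) :=
            mul_lt_mul_of_pos_left hy' hM0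
          have hMr : M * (r / (2 * M)) = r / 2 := by field_simp
          linarith
        have ht : |μA (Q y) / r| < 1 / 2 := by
          rw [abs_of_nonneg (div_nonneg (hμ_nonneg _) hr.le)]
          rw [div_lt_iff₀ hr]
          linarith [hμy]
        have h7 := hφ_one _ ht
        rw [hchi']; simp [h7]
      have hev : chi =ᶠ[nhds x] fun _ => (0:ℝ) :=
        Filter.eventuallyEq_of_mem (hS.mem_nhds h1) hEq
      constructor
      · exact (contDiffAt_const (c := (0:ℝ))).congr_of_eventuallyEq hev
      · rw [hev.fderiv_eq, fderiv_fun_const]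
        simpa using hbound0
    · -- Q x ≠ 0
      have hQx0 : Q x ≠ 0 := by
        intro h
        rw [h] at h1
        apply h1
        simp only [norm_zero]
        positivity
      have hμat : ContDiffAt ℝ p μA (Q x) :=
        hμ_smooth.contDiffAt (isOpen_compl_singleton.mem_nhds hQx0)
      have hdμ : DifferentiableAt ℝ μA (Q x) := hμat.differentiableAt (ne_of_gt (lt_of_lt_of_le zero_lt_one (show (1 : WithTop ℕ∞) ≤ p by exact_mod_cast hp)))
      have hdg : DifferentiableAt ℝ (fun y => μA (Q y)) x :=
        hdμ.comp x Q.differentiableAt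
      have hgderiv : fderiv ℝ (fun y => μA (Q y)) x = (fderiv ℝ μA (Q x)).comp Q := by
        have := fderiv_comp x hdμ Q.differentiableAt
        rw [ContinuousLinearMap.fderiv] at this; exact this
      have hgnorm : ‖fderiv ℝ (fun y => μA (Q y)) x‖ ≤ M * 2 := by
        rw [hgderiv]
        calc ‖(fderiv ℝ μA (Q x)).comp Q‖ ≤ ‖fderiv ℝ μA (Q x)‖ * ‖Q‖ :=
              ContinuousLinearMap.opNorm_comp_le _ _
        _ ≤ M * 2 := mul_le_mul (hμ_deriv _ hQx0) hQnorm (norm_nonneg _)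
              (le_of_lt hM0)
      set g : X → ℝ := fun y => μA (Q y) with hgdef
      set t : ℝ := g x / r with htdef
      have h2 : HasFDerivAt (fun y => g y / r) (r⁻¹ • fderiv ℝ g x) x := by
        simpa [div_eq_inv_mul, mul_comm, Pi.smul_def, smul_eq_mul] using
          (hdg.hasFDerivAt.const_smul (r⁻¹))
      have h3 : HasDerivAt φ (deriv φ t) t :=
        ((hφ_smooth.differentiable (by simp)) t).hasDerivAt
      have h4 : HasFDerivAt (fun y => φ (g y / r))
          (deriv φ t • (r⁻¹ • fderiv ℝ g x)) x :=
        h3.comp_hasFDerivAt x h2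
      have h5 : HasFDerivAt chi (-(deriv φ t • (r⁻¹ • fderiv ℝ g x))) x := by
        rw [hchi']
        simpa [Pi.sub_def] using (hasFDerivAt_const (1:ℝ) x).sub h4
      constructor
      · rw [hchi']
        refine ContDiffAt.sub contDiffAt_const ?_
        have hφat : ContDiffAt ℝ p φ (g x / r) :=
          (hφ_smooth.of_le (by simp)).contDiffAt
        exact hφat.comp x ((hμat.comp x Q.contDiff.contDiffAt).div_const r)
      · rw [h5.fderiv]
        rw [norm_neg, norm_smul, norm_smul]
        have hφb := hφ_deriv t
        have : ‖deriv φ t‖ * (‖r⁻¹‖ * ‖fderiv ℝ g x‖) ≤ 3 * (r⁻¹ * (M * 2)) := by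
          rw [Real.norm_eq_abs, Real.norm_eq_abs, abs_of_nonneg (inv_nonneg.mpr hr.le)]
          have hrinv : (0:ℝ) ≤ r⁻¹ := inv_nonneg.mpr hr.le
          have h6 : |deriv φ t| * (r⁻¹ * ‖fderiv ℝ g x‖) ≤ 3 * (r⁻¹ * (M * 2)) := by
            apply mul_le_mul hφb _ (by positivity) (by norm_num)
            exact mul_le_mul_of_nonneg_left hgnorm hrinv
          exact h6
        calc ‖deriv φ t‖ * (‖r⁻¹‖ * ‖fderiv ℝ g x‖) ≤ 3 * (r⁻¹ * (M * 2)) := this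
        _ = 6 * M / r := by field_simp; ring
  refine ⟨?_, ?_, fun x => (key x).2⟩
  · intro x
    rw [hchi x]
    have h := hφ_mem (μA (x - P x) / r)
    exact ⟨by linarith [h.2], by linarith [h.1]⟩
  · exact contDiff_iff_contDiffAt.mpr fun x => (key x).1
end

section
/- Let X be a Banach space with Schauder basis {e_j} with coordinate functionals {e_j*} and canonical projections P_n(x) = Σ_{j=1}^n e_j*(x) e_j (P_0 = 0), with unconditional basis constant 1, i.e., for every x = Σ_j x_j e_j ∈ X and every scalar sequence (λ_j) with |λ_j| ≤ 1 for all j, the series Σ_j λ_j x_j e_j converges and ‖Σ_j λ_j x_j e_j‖ ≤ ‖x‖. Let M ≥ 1 and let μ_A : X → [0,∞) be Lipschitz, C^p-smooth on X \ {0}, with (1/M)‖x‖ ≤ μ_A(x) ≤ M‖x‖ and ‖μ_A′(x)‖ ≤ M for all x ≠ 0. Let φ : ℝ → [0,1] be a C^∞-smooth function with φ(t) = 1 for |t| < 1/2, φ(t) = 0 for |t| > 1, and |φ′(t)| ≤ 3 for all t. For r > 0 define χ_n(x) = 1 − φ(μ_A(x − P_{n−1}(x))/r) and Ψ(x) = Σ_n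 χ_n(x) e_n*(x) e_n. Then Ψ : X → X is C^p-smooth, its Fréchet derivative is given by Ψ′(x)(h) = Σ_n χ_n′(x)(h) e_n*(x) e_n + Σ_n χ_n(x) e_n*(h) e_n, and ‖Ψ′(x)‖ ≤ 8M² for every x ∈ X. -/
open Filter Topology

set_option maxHeartbeats 2000000 in
/-- (2.7) and the estimate `‖Ψ'(x)‖ ≤ 8M²`: the map `Ψ(x) = Σₙ χₙ(x) eₙ*(x) eₙ` is
`C^p`-smooth, its Fréchet derivative is
`Ψ'(x)(h) = Σₙ χₙ'(x)(h) eₙ*(x) eₙ + Σₙ χₙ(x) eₙ*(h) eₙ`, and `‖Ψ'(x)‖ ≤ 8M²`. -/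
theorem psi_smooth_deriv_formula_and_bound
    {X : Type*} [NormedAddCommGroup X] [NormedSpace ℝ X] [CompleteSpace X]
    (p : ℕ∞) (hp : 1 ≤ p)
    (e : ℕ → X) (estar : ℕ → X →L[ℝ] ℝ)
    (hbio : ∀ i j : ℕ, estar i (e j) = if i = j then 1 else 0)
    (hbasis : ∀ x : X,
      Tendsto (fun n : ℕ => ∑ j ∈ Finset.range n, estar j x • e j) atTop (𝓝 x))
    (huncond : ∀ (x : X) (lam : ℕ → ℝ), (∀ j : ℕ, |lam j| ≤ 1) →
      ∃ y : X, Tendsto (fun n : ℕ => ∑ j ∈ Finset.range n, (lam j * estar j x) • e j)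
          atTop (𝓝 y) ∧ ‖y‖ ≤ ‖x‖)
    (M : ℝ) (hM : 1 ≤ M)
    (μA : X → ℝ) (hμ_lip : ∃ C : NNReal, LipschitzWith C μA)
    (hμ_smooth : ContDiffOn ℝ p μA {(0 : X)}ᶜ)
    (hμ_nonneg : ∀ x : X, 0 ≤ μA x)
    (hμ_lower : ∀ x : X, (1 / M) * ‖x‖ ≤ μA x)
    (hμ_upper : ∀ x : X, μA x ≤ M * ‖x‖)
    (hμ_deriv : ∀ x : X, x ≠ 0 → ‖fderiv ℝ μA x‖ ≤ M)
    (φ : ℝ → ℝ) (hφ_smooth : ContDiff ℝ (⊤ : ℕ∞) φ)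
    (hφ_mem : ∀ t : ℝ, φ t ∈ Set.Icc (0 : ℝ) 1)
    (hφ_one : ∀ t : ℝ, |t| < 1 / 2 → φ t = 1)
    (hφ_zero : ∀ t : ℝ, 1 < |t| → φ t = 0)
    (hφ_deriv : ∀ t : ℝ, |deriv φ t| ≤ 3)
    (r : ℝ) (hr : 0 < r)
    (chi : ℕ → X → ℝ)
    (hchi : ∀ (n : ℕ) (x : X),
      chi n x = 1 - φ (μA (x - ∑ j ∈ Finset.range n, estar j x • e j) / r))
    (Ψ : X → X)
    (hΨ : ∀ x : X, Ψ x = ∑' n : ℕ, (chi n x * estar n x) • e n) :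
    ContDiff ℝ p Ψ ∧
    (∀ x h : X, fderiv ℝ Ψ x h =
      (∑' n : ℕ, (fderiv ℝ (chi n) x h * estar n x) • e n) +
        ∑' n : ℕ, (chi n x * estar n h) • e n) ∧
    ∀ x : X, ‖fderiv ℝ Ψ x‖ ≤ 8 * M ^ 2 := by
  classical
  obtain ⟨C, hC⟩ := hμ_lip
  have hM0 : (0:ℝ) < M := lt_of_lt_of_le one_pos hM
  have hp' : (1 : WithTop ℕ∞) ≤ (p : WithTop ℕ∞) := by exact_mod_cast hp
  have hμcont : Continuous μA := hC.continuous
  have hμ0 : μA 0 = 0 := le_antisymm (by simpa using hμ_upper 0) (hμ_nonneg 0)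
  set P : ℕ → X →L[ℝ] X := fun n => ∑ j ∈ Finset.range n, (estar j).smulRight (e j) with hPdef
  have hP : ∀ (n : ℕ) (x : X), P n x = ∑ j ∈ Finset.range n, estar j x • e j := by
    intro n x
    rw [hPdef]
    simp [ContinuousLinearMap.sum_apply]
  set L : ℕ → X →L[ℝ] X := fun n => ContinuousLinearMap.id ℝ X - P n with hLdef
  have hLa : ∀ (n : ℕ) (x : X), L n x = x - P n x := by
    intro n x
    rw [hLdef]
    simp
  -- coordinates of tails
  have hco : ∀ (m j : ℕ) (x : X), estar j (L m x) = if j < m then 0 else estar j x := by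
    intro m j x
    rw [hLa, map_sub, hP, map_sum]
    simp only [map_smul, hbio, smul_eq_mul, mul_ite, mul_one, mul_zero]
    rw [Finset.sum_ite_eq (Finset.range m) j (fun i => estar i x)]
    by_cases h : j < m <;> simp [Finset.mem_range, h]
  -- the key unconditionality estimate for finite sums
  have key : ∀ (x : X) (lam : ℕ → ℝ), (∀ j, |lam j| ≤ 1) → ∀ N : ℕ,
      ‖∑ j ∈ Finset.range N, (lam j * estar j x) • e j‖ ≤ ‖x‖ := by
    intro x lam hlam N
    set lam' : ℕ → ℝ := fun j => if j < N then lam j else 0 with hl'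
    have hlam' : ∀ j, |lam' j| ≤ 1 := by
      intro j; by_cases h : j < N <;> simp [hl', h, hlam j]
    obtain ⟨y, hy, hyx⟩ := huncond x lam' hlam'
    have hev : ∀ m, N ≤ m →
        (∑ j ∈ Finset.range m, (lam' j * estar j x) • e j)
          = ∑ j ∈ Finset.range N, (lam j * estar j x) • e j := by
      intro m hm
      rw [← Finset.sum_subset (Finset.range_subset_range.2 hm)
        (fun j _ hjN => by simp [hl', Finset.mem_range.1, (by simpa using hjN : ¬ j < N)])]
      exact Finset.sum_congr rfl fun j hj => by simp [hl', Finset.mem_range.1 hj]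
    have hT : Tendsto (fun _ : ℕ => ∑ j ∈ Finset.range N, (lam j * estar j x) • e j)
        atTop (𝓝 y) :=
      hy.congr' (eventually_atTop.2 ⟨N, hev⟩)
    have hyeq : (∑ j ∈ Finset.range N, (lam j * estar j x) • e j) = y :=
      tendsto_nhds_unique tendsto_const_nhds hT
    rw [hyeq]; exact hyx
  -- splitting sums
  have hsplit : ∀ (f : ℕ → X) (m n : ℕ), m ≤ n →
      (∑ j ∈ Finset.range n, if j < m then (0:X) else f j) =
        ∑ j ∈ Finset.range n, f j - ∑ j ∈ Finset.range m, f j := by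
    intro f m n hmn
    have h1 : ∑ j ∈ Finset.range m, f j = ∑ j ∈ Finset.range n, if j < m then f j else 0 := by
      refine (Finset.sum_congr rfl fun j hj => ?_).trans
        (Finset.sum_subset (Finset.range_subset_range.2 hmn) fun j _ hj => ?_)
      · rw [if_pos (Finset.mem_range.1 hj)]
      · rw [if_neg (fun h => hj (Finset.mem_range.2 h))]
    rw [h1, ← Finset.sum_sub_distrib]
    exact Finset.sum_congr rfl fun j hj => by by_cases h : j < m <;> simp [h]
  -- norm of tails
  have hIPle : ∀ (n : ℕ) (x : X), ‖L n x‖ ≤ ‖x‖ := by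
    intro n x
    set lam : ℕ → ℝ := fun j => if j < n then 0 else 1 with hlamd
    have hlam1 : ∀ j, |lam j| ≤ 1 := fun j => by by_cases h : j < n <;> simp [hlamd, h]
    have hEq : ∀ m, n ≤ m → (∑ j ∈ Finset.range m, (lam j * estar j x) • e j)
        = (∑ j ∈ Finset.range m, estar j x • e j) - ∑ j ∈ Finset.range n, estar j x • e j := by
      intro m hm
      rw [← hsplit (fun j => estar j x • e j) n m hm]
      exact Finset.sum_congr rfl fun j hj => by by_cases h : j < n <;> simp [hlamd, h]
    have h2 : Tendsto (fun m => (∑ j ∈ Finset.range m, estar j x • e j)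
        - ∑ j ∈ Finset.range n, estar j x • e j) atTop (𝓝 (L n x)) := by
      have := (hbasis x).sub (tendsto_const_nhds
        (x := ∑ j ∈ Finset.range n, estar j x • e j) (f := atTop))
      rw [hLa, hP]
      exact this
    have hT : Tendsto (fun m => ∑ j ∈ Finset.range m, (lam j * estar j x) • e j)
        atTop (𝓝 (L n x)) :=
      h2.congr' (eventually_atTop.2 ⟨n, fun m hm => (hEq m hm).symm⟩)
    exact le_of_tendsto hT.norm (Eventually.of_forall fun m => key x lam hlam1 m)
  -- tail estimate with coefficients vanishing below m
  have keyTail : ∀ (x : X) (lam : ℕ → ℝ), (∀ j, |lam j| ≤ 1) → ∀ (m N : ℕ),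
      (∀ j, j < m → lam j = 0) →
      ‖∑ j ∈ Finset.range N, (lam j * estar j x) • e j‖ ≤ ‖L m x‖ := by
    intro x lam hlam m N hm0
    have hkey := key (L m x) lam hlam N
    calc ‖∑ j ∈ Finset.range N, (lam j * estar j x) • e j‖
        = ‖∑ j ∈ Finset.range N, (lam j * estar j (L m x)) • e j‖ := by
          congr 1
          refine Finset.sum_congr rfl fun j hj => ?_
          rw [hco m j x]
          by_cases h : j < m
          · simp [h, hm0 j h]
          · simp [h]
      _ ≤ ‖L m x‖ := hkey
  -- tails tend to zero
  have hLnx : ∀ x : X, Tendsto (fun n => L n x) atTop (𝓝 0) := by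
    intro x
    have h := tendsto_const_nhds (x := x) (f := (atTop : Filter ℕ)) |>.sub (hbasis x)
    rw [sub_self] at h
    refine h.congr fun n => ?_
    rw [hLa, hP]
  -- basic chi facts
  have hchi' : ∀ (n : ℕ) (x : X), chi n x = 1 - φ (μA (L n x) / r) := by
    intro n x; rw [hchi, hLa, hP]
  have hchi01 : ∀ (n : ℕ) (x : X), 0 ≤ chi n x ∧ chi n x ≤ 1 := by
    intro n x
    have h := hφ_mem (μA (L n x) / r)
    rw [hchi' n x]
    exact ⟨by linarith [h.2], by linarith [h.1]⟩
  have hchi0 : ∀ (n : ℕ) (y : X), μA (L n y) < r/2 → chi n y = 0 := by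
    intro n y hy
    rw [hchi' n y]
    have ht : |μA (L n y) / r| < 1/2 := by
      rw [abs_of_nonneg (div_nonneg (hμ_nonneg _) hr.le), div_lt_iff₀ hr]
      linarith
    rw [hφ_one _ ht]; ring
  have hchi1 : ∀ (n : ℕ) (y : X), r < μA (L n y) → chi n y = 1 := by
    intro n y hy
    rw [hchi' n y]
    have ht : 1 < |μA (L n y) / r| := by
      rw [abs_of_nonneg (div_nonneg (hμ_nonneg _) hr.le), lt_div_iff₀ hr]
      linarith
    rw [hφ_zero _ ht]; ring
  have hchi_loc0 : ∀ (n : ℕ) (x : X), μA (L n x) < r/2 →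
      (chi n) =ᶠ[𝓝 x] fun _ => (0:ℝ) := by
    intro n x hlt
    have hcont : Continuous fun y => μA (L n y) := hμcont.comp (L n).continuous
    have hopen : IsOpen {y : X | μA (L n y) < r/2} := isOpen_lt hcont continuous_const
    filter_upwards [hopen.mem_nhds hlt] with y hy
    exact hchi0 n y hy
  have hchi_loc1 : ∀ (n : ℕ) (x : X), r < μA (L n x) →
      (chi n) =ᶠ[𝓝 x] fun _ => (1:ℝ) := by
    intro n x hlt
    have hcont : Continuous fun y => μA (L n y) := hμcont.comp (L n).continuous
    have hopen : IsOpen {y : X | r < μA (L n y)} := isOpen_lt continuous_const hcont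
    filter_upwards [hopen.mem_nhds hlt] with y hy
    exact hchi1 n y hy
  have hLne : ∀ (n : ℕ) (x : X), r/2 ≤ μA (L n x) → L n x ≠ 0 := by
    intro n x hge hx0
    rw [hx0, hμ0] at hge
    linarith
  -- derivative of chi in the nontrivial region
  have hchiD : ∀ (n : ℕ) (x : X), L n x ≠ 0 → HasFDerivAt (chi n)
      (-(deriv φ (r⁻¹ * μA (L n x)) • (r⁻¹ • ((fderiv ℝ μA (L n x)).comp (L n))))) x := by
    intro n x hx
    have hdμ : DifferentiableAt ℝ μA (L n x) :=
      (hμ_smooth.contDiffAt (isOpen_compl_singleton.mem_nhds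
        (Set.mem_compl_singleton_iff.2 hx))).differentiableAt (lt_of_lt_of_le zero_lt_one hp').ne'
    have H1 : HasFDerivAt (fun y => μA (L n y)) ((fderiv ℝ μA (L n x)).comp (L n)) x :=
      HasFDerivAt.comp x hdμ.hasFDerivAt (L n).hasFDerivAt
    have H2 : HasFDerivAt (fun y => r⁻¹ * μA (L n y))
        (r⁻¹ • ((fderiv ℝ μA (L n x)).comp (L n))) x := by
      exact H1.const_mul r⁻¹
    have Hφd : HasDerivAt φ (deriv φ (r⁻¹ * μA (L n x))) (r⁻¹ * μA (L n x)) :=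
      ((hφ_smooth.differentiable (by simp)) _).hasDerivAt
    have H3 := Hφd.comp_hasFDerivAt x H2
    have H4 := (hasFDerivAt_const (1:ℝ) x).sub H3
    have hchieq : chi n = fun y => 1 - (φ ∘ fun y => r⁻¹ * μA (L n y)) y := by
      funext y
      rw [hchi' n y, Function.comp_apply, div_eq_inv_mul]
    rw [hchieq]
    exact H3.const_sub 1
  -- smoothness of chi
  have hchi_smooth : ∀ n : ℕ, ContDiff ℝ p (chi n) := by
    intro n
    rw [contDiff_iff_contDiffAt]
    intro x
    by_cases hlt : μA (L n x) < r/2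
    · exact contDiffAt_const.congr_of_eventuallyEq (hchi_loc0 n x hlt)
    · have hx0 : L n x ≠ 0 := hLne n x (not_lt.1 hlt)
      have h1 : ContDiffAt ℝ p μA (L n x) :=
        hμ_smooth.contDiffAt (isOpen_compl_singleton.mem_nhds
          (Set.mem_compl_singleton_iff.2 hx0))
      have h2 : ContDiffAt ℝ p (fun y => μA (L n y)) x := h1.comp x (L n).contDiff.contDiffAt
      have h3 : ContDiffAt ℝ p (fun y => φ (μA (L n y) / r)) x :=
        (hφ_smooth.of_le (by simp)).contDiffAt.comp x (h2.div_const r)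
      have hchieq : chi n = fun y => 1 - φ (μA (L n y) / r) := funext (hchi' n)
      rw [hchieq]
      exact contDiffAt_const.sub h3
  have hchi_diff : ∀ n : ℕ, Differentiable ℝ (chi n) :=
    fun n => (hchi_smooth n).differentiable (lt_of_lt_of_le zero_lt_one hp').ne'
  -- vanishing of the derivative
  have hfd0 : ∀ (n : ℕ) (x : X), μA (L n x) < r/2 → fderiv ℝ (chi n) x = 0 := by
    intro n x hlt
    rw [(hchi_loc0 n x hlt).fderiv_eq]
    exact fderiv_const_apply 0
  have hfd1 : ∀ (n : ℕ) (x : X), r < μA (L n x) → fderiv ℝ (chi n) x = 0 := by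
    intro n x hlt
    rw [(hchi_loc1 n x hlt).fderiv_eq]
    exact fderiv_const_apply 1
  -- bound on the derivative of chi
  have hfd_bound : ∀ (n : ℕ) (x h : X), |fderiv ℝ (chi n) x h| ≤ 3 * M / r * ‖h‖ := by
    intro n x h
    by_cases hlt : μA (L n x) < r/2
    · rw [hfd0 n x hlt]
      simp only [ContinuousLinearMap.zero_apply, abs_zero]
      positivity
    · have hx0 : L n x ≠ 0 := hLne n x (not_lt.1 hlt)
      rw [(hchiD n x hx0).fderiv]
      simp only [ContinuousLinearMap.neg_apply, ContinuousLinearMap.smul_apply,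
        ContinuousLinearMap.coe_comp', Function.comp_apply, smul_eq_mul, abs_neg]
      have hB : |(fderiv ℝ μA (L n x)) (L n h)| ≤ M * ‖h‖ := by
        calc |(fderiv ℝ μA (L n x)) (L n h)| = ‖(fderiv ℝ μA (L n x)) (L n h)‖ :=
              (Real.norm_eq_abs _).symm
          _ ≤ ‖fderiv ℝ μA (L n x)‖ * ‖L n h‖ := (fderiv ℝ μA (L n x)).le_opNorm _
          _ ≤ M * ‖h‖ :=
            mul_le_mul (hμ_deriv _ hx0) (hIPle n h) (norm_nonneg _) hM0.le
      calc |deriv φ (r⁻¹ * μA (L n x)) * (r⁻¹ * (fderiv ℝ μA (L n x)) (L n h))|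
          = |deriv φ (r⁻¹ * μA (L n x))| * (r⁻¹ * |(fderiv ℝ μA (L n x)) (L n h)|) := by
            rw [abs_mul, abs_mul, abs_of_pos (inv_pos.2 hr)]
        _ ≤ 3 * (r⁻¹ * (M * ‖h‖)) := by
            have h1 := hφ_deriv (r⁻¹ * μA (L n x))
            have h2 : r⁻¹ * |(fderiv ℝ μA (L n x)) (L n h)| ≤ r⁻¹ * (M * ‖h‖) :=
              mul_le_mul_of_nonneg_left hB (inv_pos.2 hr).le
            refine mul_le_mul h1 h2 ?_ (by norm_num)
            positivity
        _ = 3 * M / r * ‖h‖ := by field_simp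
  -- local finiteness data
  have locdata : ∀ x : X, ∃ (N : ℕ) (δ : ℝ), 0 < δ ∧
      ∀ y ∈ Metric.ball x δ, ∀ n, N ≤ n → μA (L n y) < r / 2 := by
    intro x
    have h0 : Tendsto (fun n => ‖L n x‖) atTop (𝓝 0) := by
      simpa using (hLnx x).norm
    obtain ⟨N, hN⟩ := Metric.tendsto_atTop.1 h0 (r / (4*M)) (by positivity)
    refine ⟨N, r / (4 * ((C:ℝ) + 1)), by positivity, ?_⟩
    intro y hy n hn
    have h1 : ‖L n x‖ < r/(4*M) := by
      have := hN n hn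
      rwa [Real.dist_eq, sub_zero, abs_of_nonneg (norm_nonneg _)] at this
    have h3 : μA (L n x) < r/4 := by
      calc μA (L n x) ≤ M * ‖L n x‖ := hμ_upper _
        _ < M * (r/(4*M)) := mul_lt_mul_of_pos_left h1 hM0
        _ = r/4 := by field_simp
    have h4 : |μA (L n y) - μA (L n x)| ≤ (C:ℝ) * ‖L n (y - x)‖ := by
      have := hC.dist_le_mul (L n y) (L n x)
      rw [Real.dist_eq, dist_eq_norm, ← map_sub] at this
      exact this
    have h5 : ‖L n (y - x)‖ ≤ ‖y - x‖ := hIPle n (y - x)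
    have h6 : ‖y - x‖ < r / (4 * ((C:ℝ) + 1)) := by
      rw [← dist_eq_norm]
      exact Metric.mem_ball.1 hy
    have hC0 : (0:ℝ) ≤ (C:ℝ) := C.coe_nonneg
    have h7 : (C:ℝ) * (r / (4 * ((C:ℝ) + 1))) ≤ r/4 := by
      rw [← mul_div_assoc, div_le_div_iff₀ (by positivity) (by norm_num)]
      nlinarith [hr, hC0]
    have h8 : μA (L n y) - μA (L n x) ≤ (C:ℝ) * ‖L n (y - x)‖ := le_of_abs_le h4
    have h9 : (C:ℝ) * ‖L n (y - x)‖ ≤ (C:ℝ) * (r / (4 * ((C:ℝ) + 1))) := by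
      refine mul_le_mul_of_nonneg_left ?_ hC0
      exact le_of_lt (lt_of_le_of_lt h5 h6)
    linarith
  -- the master local differentiability statement
  have master : ∀ x : X, ∃ N : ℕ,
      (∀ n, N ≤ n → chi n x = 0 ∧ fderiv ℝ (chi n) x = 0) ∧
      HasFDerivAt Ψ (∑ n ∈ Finset.range N,
        ((chi n x • (estar n : X →L[ℝ] ℝ) + estar n x • fderiv ℝ (chi n) x).smulRight (e n))) x := by
    intro x
    obtain ⟨N, δ, hδ, hball⟩ := locdata x
    refine ⟨N, ?_, ?_⟩
    · intro n hn
      have hx := hball x (Metric.mem_ball_self hδ) n hn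
      exact ⟨hchi0 n x hx, hfd0 n x hx⟩
    · have hterm : ∀ n : ℕ, HasFDerivAt (fun y => (chi n y * estar n y) • e n)
          ((chi n x • (estar n : X →L[ℝ] ℝ) + estar n x • fderiv ℝ (chi n) x).smulRight (e n)) x := by
        intro n
        have h1 : HasFDerivAt (chi n) (fderiv ℝ (chi n) x) x := (hchi_diff n x).hasFDerivAt
        exact (h1.mul (estar n).hasFDerivAt).smul_const (e n)
      have hsum := HasFDerivAt.sum (fun n (_ : n ∈ Finset.range N) => hterm n)
      refine hsum.congr_of_eventuallyEq ?_
      filter_upwards [Metric.ball_mem_nhds x hδ] with y hy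
      rw [hΨ y]
      rw [Finset.sum_apply]
      refine tsum_eq_sum fun n hn => ?_
      rw [hchi0 n y (hball y hy n (not_lt.1 fun hc => hn (Finset.mem_range.2 hc)))]
      simp
  -- how the derivative acts
  have hTapply : ∀ (N : ℕ) (x h : X),
      (∑ n ∈ Finset.range N,
        ((chi n x • (estar n : X →L[ℝ] ℝ) + estar n x • fderiv ℝ (chi n) x).smulRight (e n))) h
      = (∑ n ∈ Finset.range N, (fderiv ℝ (chi n) x h * estar n x) • e n)
        + ∑ n ∈ Finset.range N, (chi n x * estar n h) • e n := by
    intro N x h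
    rw [← Finset.sum_add_distrib, ContinuousLinearMap.sum_apply]
    refine Finset.sum_congr rfl fun n _ => ?_
    simp only [ContinuousLinearMap.smulRight_apply, ContinuousLinearMap.add_apply,
      ContinuousLinearMap.smul_apply, smul_eq_mul]
    rw [← add_smul]
    congr 1
    ring
  refine ⟨?_, ?_, ?_⟩
  · -- smoothness
    rw [contDiff_iff_contDiffAt]
    intro x
    obtain ⟨N, δ, hδ, hball⟩ := locdata x
    have hF : ContDiff ℝ p fun y => ∑ n ∈ Finset.range N, (chi n y * estar n y) • e n :=
      ContDiff.sum fun n _ => ((hchi_smooth n).mul (estar n).contDiff).smul contDiff_const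
    refine hF.contDiffAt.congr_of_eventuallyEq ?_
    filter_upwards [Metric.ball_mem_nhds x hδ] with y hy
    rw [hΨ y]
    refine tsum_eq_sum fun n hn => ?_
    rw [hchi0 n y (hball y hy n (not_lt.1 fun hc => hn (Finset.mem_range.2 hc)))]
    simp
  · -- the derivative formula
    intro x h
    obtain ⟨N, hvan, hF⟩ := master x
    rw [hF.fderiv]
    have hs1 : (∑' n : ℕ, (fderiv ℝ (chi n) x h * estar n x) • e n)
        = ∑ n ∈ Finset.range N, (fderiv ℝ (chi n) x h * estar n x) • e n := by
      refine tsum_eq_sum fun n hn => ?_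
      rw [(hvan n (not_lt.1 fun hc => hn (Finset.mem_range.2 hc))).2]
      simp
    have hs2 : (∑' n : ℕ, (chi n x * estar n h) • e n)
        = ∑ n ∈ Finset.range N, (chi n x * estar n h) • e n := by
      refine tsum_eq_sum fun n hn => ?_
      rw [(hvan n (not_lt.1 fun hc => hn (Finset.mem_range.2 hc))).1]
      simp
    rw [hs1, hs2]
    exact hTapply N x h
  · -- the norm bound
    intro x
    obtain ⟨N, hvan, hF⟩ := master x
    rw [hF.fderiv]
    refine ContinuousLinearMap.opNorm_le_bound _ (by positivity) fun h => ?_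
    rw [hTapply N x h]
    have hS2 : ‖∑ n ∈ Finset.range N, (chi n x * estar n h) • e n‖ ≤ ‖h‖ := by
      refine key h (fun n => chi n x) (fun n => ?_) N
      exact abs_le.2 ⟨by linarith [(hchi01 n x).1], (hchi01 n x).2⟩
    have hS1 : ‖∑ n ∈ Finset.range N, (fderiv ℝ (chi n) x h * estar n x) • e n‖
        ≤ 3 * M^2 * ‖h‖ := by
      by_cases hex : ∃ n, fderiv ℝ (chi n) x ≠ 0
      · obtain ⟨m, hm, hmin⟩ : ∃ m : ℕ, fderiv ℝ (chi m) x ≠ 0 ∧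
            ∀ k, k < m → fderiv ℝ (chi k) x = 0 :=
          ⟨Nat.find hex, Nat.find_spec hex, fun k hk => not_not.1 (Nat.find_min hex hk)⟩
        have hub : μA (L m x) ≤ r := not_lt.1 fun hcon => hm (hfd1 m x hcon)
        have hw : ‖L m x‖ ≤ M * r := by
          have h1 := hμ_lower (L m x)
          have h2 := mul_le_mul_of_nonneg_left h1 hM0.le
          rw [show M * (1/M * ‖L m x‖) = ‖L m x‖ by field_simp] at h2
          calc ‖L m x‖ ≤ M * μA (L m x) := h2
            _ ≤ M * r := mul_le_mul_of_nonneg_left hub hM0.le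
        by_cases hh : h = 0
        · have hz : ∀ n ∈ Finset.range N, (fderiv ℝ (chi n) x h * estar n x) • e n = 0 := by
            intro n _
            rw [hh]
            simp
          rw [Finset.sum_eq_zero hz, norm_zero]
          positivity
        · have hhn : 0 < ‖h‖ := norm_pos_iff.2 hh
          have hc0 : (0:ℝ) < 3 * M * ‖h‖ / r := by positivity
          have hlam1 : ∀ n, |fderiv ℝ (chi n) x h * (r / (3 * M * ‖h‖))| ≤ 1 := by
            intro n
            rw [abs_mul, abs_of_pos (by positivity : (0:ℝ) < r / (3 * M * ‖h‖))]
            have h1 := hfd_bound n x h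
            have h2 : (0:ℝ) < r / (3 * M * ‖h‖) := by positivity
            calc |fderiv ℝ (chi n) x h| * (r / (3 * M * ‖h‖))
                ≤ (3 * M / r * ‖h‖) * (r / (3 * M * ‖h‖)) :=
                  mul_le_mul_of_nonneg_right h1 h2.le
              _ = 1 := by field_simp
          have hlam0 : ∀ j, j < m → fderiv ℝ (chi j) x h * (r / (3 * M * ‖h‖)) = 0 := by
            intro j hj
            rw [hmin j hj]
            simp
          have hkey := keyTail x (fun n => fderiv ℝ (chi n) x h * (r / (3 * M * ‖h‖)))
            hlam1 m N hlam0
          have hS1eq : (∑ n ∈ Finset.range N, (fderiv ℝ (chi n) x h * estar n x) • e n)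
              = (3 * M * ‖h‖ / r) • ∑ n ∈ Finset.range N,
                  ((fderiv ℝ (chi n) x h * (r / (3 * M * ‖h‖))) * estar n x) • e n := by
            rw [Finset.smul_sum]
            refine Finset.sum_congr rfl fun n _ => ?_
            rw [smul_smul]
            congr 1
            field_simp
          rw [hS1eq, norm_smul, Real.norm_eq_abs, abs_of_pos hc0]
          calc (3 * M * ‖h‖ / r)
                * ‖∑ n ∈ Finset.range N,
                    ((fderiv ℝ (chi n) x h * (r / (3 * M * ‖h‖))) * estar n x) • e n‖
              ≤ (3 * M * ‖h‖ / r) * (M * r) :=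
                mul_le_mul_of_nonneg_left (hkey.trans hw) hc0.le
            _ = 3 * M^2 * ‖h‖ := by field_simp
      · push_neg at hex
        have hz : (∑ n ∈ Finset.range N, (fderiv ℝ (chi n) x h * estar n x) • e n) = 0 :=
          Finset.sum_eq_zero fun n _ => by rw [hex n]; simp
        rw [hz, norm_zero]
        positivity
    calc ‖(∑ n ∈ Finset.range N, (fderiv ℝ (chi n) x h * estar n x) • e n)
          + ∑ n ∈ Finset.range N, (chi n x * estar n h) • e n‖
        ≤ ‖∑ n ∈ Finset.range N, (fderiv ℝ (chi n) x h * estar n x) • e n‖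
          + ‖∑ n ∈ Finset.range N, (chi n x * estar n h) • e n‖ := norm_add_le _ _
      _ ≤ 3 * M^2 * ‖h‖ + ‖h‖ := add_le_add hS1 hS2
      _ ≤ 8 * M^2 * ‖h‖ := by nlinarith [norm_nonneg h, hM, sq_nonneg (M - 1)]
end
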